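/- arXiv:1511.05273 — 2 statements merged into one kernel-verified Lean document; each statement's English description precedes it below -/
import Mathlib

section
/- Let T1 and T2 be metric transition systems with a common label pseudometric space (Σ, d_Σ) and a common output pseudometric space (Π, d_Π), let τ ≥ 0, and let V : Q1 × Q2 → [0,∞] be a τ-simulation function of T1 by T2. Assume in addition that for every (q1,q2) ∈ Q1 × Q2 and every transition q1 →σ q1' of T1, the infimum inf{ V(q1',q2') : q2 →σ' q2' is a transition of T2 with σ' ∈ B_τ(σ) } is attained whenever the set of such transitions is nonempty. Then for every ε ≥ 0, the sublevel set L_ε := {(q1,q2) ∈ Q1 × Q2 : V(q1,q2) ≤ ε} is a (τ,ε)-space-time approximate simulation of T1 by T2. -/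
open scoped ENNReal

/-- The sublevel-set characterization (equation (15) of the paper): if `V` is a
τ-simulation function of `T1` by `T2` (conditions A0 and A1, with `inf ∅ = ∞`,
`sup ∅ = 0` in `[0,∞]`), and the inner infima over matching `T2`-transitions are
attained whenever a matching transition exists, then for every `ε ≥ 0` the sublevel set
`L_ε = {(q1,q2) : V(q1,q2) ≤ ε}` is a (τ,ε)-space-time approximate simulation of `T1`
by `T2`. -/
theorem sublevel_set_is_STAS
    {Q1 Q2 Λ Pi : Type*}
    (dLab : Λ → Λ → ℝ) (dOut : Pi → Pi → ℝ)
    (Tr1 : Q1 → Λ → Q1 → Prop) (Tr2 : Q2 → Λ → Q2 → Prop)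
    (out1 : Q1 → Pi) (out2 : Q2 → Pi)
    (τ : ℝ) (hτ : 0 ≤ τ)
    (V : Q1 × Q2 → ℝ≥0∞)
    -- (A0)
    (hA0 : ∀ q1 q2, ENNReal.ofReal (dOut (out1 q1) (out2 q2)) ≤ V (q1, q2))
    -- (A1)
    (hA1 : ∀ q1 q2,
      (⨆ t : {t : Λ × Q1 // Tr1 q1 t.1 t.2},
        ⨅ r : {r : Λ × Q2 // Tr2 q2 r.1 r.2 ∧ dLab t.1.1 r.1 ≤ τ},
          V (t.1.2, r.1.2)) ≤ V (q1, q2))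
    -- attainment of the inner infimum whenever a matching transition exists
    (hatt : ∀ q1 q2 σ q1', Tr1 q1 σ q1' →
      (∃ σ' q2', Tr2 q2 σ' q2' ∧ dLab σ σ' ≤ τ) →
      ∃ σ' q2', Tr2 q2 σ' q2' ∧ dLab σ σ' ≤ τ ∧
        V (q1', q2') =
          ⨅ r : {r : Λ × Q2 // Tr2 q2 r.1 r.2 ∧ dLab σ r.1 ≤ τ}, V (q1', r.1.2)) :
    ∀ ε : ℝ, 0 ≤ ε →
      -- (1) pairs in L_ε have ε-close outputs
      (∀ q1 q2, V (q1, q2) ≤ ENNReal.ofReal ε →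
        dOut (out1 q1) (out2 q2) ≤ ε) ∧
      -- (2) every T1-transition from a pair in L_ε is matched by a τ-close T2-transition
      --     landing back in L_ε
      (∀ q1 q2, V (q1, q2) ≤ ENNReal.ofReal ε →
        ∀ σ q1', Tr1 q1 σ q1' →
          ∃ σ' q2', dLab σ σ' ≤ τ ∧ Tr2 q2 σ' q2' ∧
            V (q1', q2') ≤ ENNReal.ofReal ε) := by
  intro ε hε
  constructor
  · intro q1 q2 hV
    have h := (hA0 q1 q2).trans hV
    exact (ENNReal.ofReal_le_ofReal_iff hε).mp h
  · intro q1 q2 hV σ q1' htr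
    -- the inner infimum for this transition is ≤ ofReal ε
    have hsup := (hA1 q1 q2).trans hV
    have hinf : (⨅ r : {r : Λ × Q2 // Tr2 q2 r.1 r.2 ∧ dLab σ r.1 ≤ τ},
        V (q1', r.1.2)) ≤ ENNReal.ofReal ε := by
      refine le_trans ?_ hsup
      exact le_iSup_of_le ⟨(σ, q1'), htr⟩ le_rfl
    -- the index set is nonempty
    have hne : ∃ σ' q2', Tr2 q2 σ' q2' ∧ dLab σ σ' ≤ τ := by
      by_contra h
      have : IsEmpty {r : Λ × Q2 // Tr2 q2 r.1 r.2 ∧ dLab σ r.1 ≤ τ} := by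
        constructor
        rintro ⟨⟨σ', q2'⟩, h1, h2⟩
        exact h ⟨σ', q2', h1, h2⟩
      rw [iInf_of_empty] at hinf
      exact (ENNReal.ofReal_lt_top.trans_le hinf).false
    obtain ⟨σ', q2', h1, h2, heq⟩ := hatt q1 q2 σ q1' htr hne
    exact ⟨σ', q2', h2, h1, heq.le.trans hinf⟩
end

section
/- Let T1 and T2 be metric transition systems with a common label pseudometric space (Σ, d_Σ), a common output pseudometric space (Π, d_Π), and nonempty initial state sets Q1⁰ ⊆ Q1, Q2⁰ ⊆ Q2. Let τ ≥ 0 and let V : Q1 × Q2 → [0,∞] be a τ-simulation function of T1 by T2 such that: (i) for every (q1,q2) and every transition q1 →σ q1' of T1, the infimum inf{ V(q1',q2') : q2 →σ' q2' is a transition of T2 with σ' ∈ B_τ(σ) } is attained whenever the set of such transitions is nonempty; (ii) for every q1⁰ ∈ Q1⁰, the infimum inf{ V(q1⁰,q2⁰) : q2⁰ ∈ Q2⁰ } is attained. Set ε := sup_{q1⁰ ∈ Q1⁰} inf_{q2⁰ ∈ Q2⁰} V(q1⁰, q2⁰), and assume ε < ∞. Then T2 simulates T1 with precision (τ,ε):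 the sublevel set L_ε = {(q1,q2) : V(q1,q2) ≤ ε} is a (τ,ε)-space-time approximate simulation of T1 by T2, and for every q1⁰ ∈ Q1⁰ there exists q2⁰ ∈ Q2⁰ with (q1⁰,q2⁰) ∈ L_ε. -/
open scoped ENNReal

/-- Initial-state precision: if `V` is a τ-simulation function of `T1` by `T2` whose inner
infima over matching transitions are attained whenever a match exists, and whose infima
over initial states of `T2` are attained, and if
`ε := sup_{q10 ∈ Q10} inf_{q20 ∈ Q20} V(q10,q20)` is finite, then `T2` simulates `T1`
with precision (τ,ε): the sublevel set `L_ε = {V ≤ ε}` is a (τ,ε)-STAS of `T1` by `T2`,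
and every initial state of `T1` is `L_ε`-related to some initial state of `T2`. -/
theorem simulates_with_precision_of_simFn
    {Q1 Q2 Λ Pi : Type*}
    (dLab : Λ → Λ → ℝ) (dOut : Pi → Pi → ℝ)
    (Tr1 : Q1 → Λ → Q1 → Prop) (Tr2 : Q2 → Λ → Q2 → Prop)
    (out1 : Q1 → Pi) (out2 : Q2 → Pi)
    (Q10 : Set Q1) (Q20 : Set Q2) (hQ10 : Q10.Nonempty) (hQ20 : Q20.Nonempty)
    (τ : ℝ) (hτ : 0 ≤ τ)
    (V : Q1 × Q2 → ℝ≥0∞)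
    -- (A0)
    (hA0 : ∀ q1 q2, ENNReal.ofReal (dOut (out1 q1) (out2 q2)) ≤ V (q1, q2))
    -- (A1)
    (hA1 : ∀ q1 q2,
      (⨆ t : {t : Λ × Q1 // Tr1 q1 t.1 t.2},
        ⨅ r : {r : Λ × Q2 // Tr2 q2 r.1 r.2 ∧ dLab t.1.1 r.1 ≤ τ},
          V (t.1.2, r.1.2)) ≤ V (q1, q2))
    -- (i) attainment of the inner infimum whenever a matching transition exists
    (hatt : ∀ q1 q2 σ q1', Tr1 q1 σ q1' →
      (∃ σ' q2', Tr2 q2 σ' q2' ∧ dLab σ σ' ≤ τ) →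
      ∃ σ' q2', Tr2 q2 σ' q2' ∧ dLab σ σ' ≤ τ ∧
        V (q1', q2') =
          ⨅ r : {r : Λ × Q2 // Tr2 q2 r.1 r.2 ∧ dLab σ r.1 ≤ τ}, V (q1', r.1.2))
    -- (ii) attainment of the infimum over initial states of T2
    (hatt0 : ∀ q10 ∈ Q10, ∃ q20 ∈ Q20,
      V (q10, q20) = ⨅ q20' ∈ Q20, V (q10, q20'))
    (ε : ℝ≥0∞)
    (hε : ε = ⨆ q10 ∈ Q10, ⨅ q20 ∈ Q20, V (q10, q20))
    (hεfin : ε < ⊤) :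
    -- (1) pairs in L_ε have ε-close outputs
    (∀ q1 q2, V (q1, q2) ≤ ε → ENNReal.ofReal (dOut (out1 q1) (out2 q2)) ≤ ε) ∧
    -- (2) every T1-transition from a pair in L_ε is matched by a τ-close T2-transition
    --     landing back in L_ε
    (∀ q1 q2, V (q1, q2) ≤ ε →
      ∀ σ q1', Tr1 q1 σ q1' →
        ∃ σ' q2', dLab σ σ' ≤ τ ∧ Tr2 q2 σ' q2' ∧ V (q1', q2') ≤ ε) ∧
    -- (3) every initial state of T1 is L_ε-related to an initial state of T2
    (∀ q10 ∈ Q10, ∃ q20 ∈ Q20, V (q10, q20) ≤ ε) := by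
  refine ⟨fun q1 q2 h => le_trans (hA0 q1 q2) h, ?_, ?_⟩
  · intro q1 q2 h σ q1' htr
    have hsup : (⨅ r : {r : Λ × Q2 // Tr2 q2 r.1 r.2 ∧ dLab σ r.1 ≤ τ},
        V (q1', r.1.2)) ≤ ε := by
      refine le_trans ?_ (le_trans (hA1 q1 q2) h)
      exact le_iSup (fun t : {t : Λ × Q1 // Tr1 q1 t.1 t.2} =>
        ⨅ r : {r : Λ × Q2 // Tr2 q2 r.1 r.2 ∧ dLab t.1.1 r.1 ≤ τ}, V (t.1.2, r.1.2))
        ⟨(σ, q1'), htr⟩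
    have hne : ∃ σ' q2', Tr2 q2 σ' q2' ∧ dLab σ σ' ≤ τ := by
      by_contra hemp
      have : IsEmpty {r : Λ × Q2 // Tr2 q2 r.1 r.2 ∧ dLab σ r.1 ≤ τ} := by
        constructor; rintro ⟨⟨σ', q2'⟩, h1, h2⟩; exact hemp ⟨σ', q2', h1, h2⟩
      rw [iInf_of_empty] at hsup
      exact absurd (lt_of_le_of_lt hsup hεfin) (lt_irrefl ⊤)
    obtain ⟨σ', q2', h1, h2, h3⟩ := hatt q1 q2 σ q1' htr hne
    exact ⟨σ', q2', h2, h1, h3 ▸ hsup⟩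
  · intro q10 hq10
    obtain ⟨q20, hq20, heq⟩ := hatt0 q10 hq10
    refine ⟨q20, hq20, heq ▸ ?_⟩
    rw [hε]
    exact le_iSup₂ (f := fun q10 (_ : q10 ∈ Q10) => ⨅ q20 ∈ Q20, V (q10, q20)) q10 hq10
end
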